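/- arXiv:1011.4283 — 9 statements merged into one kernel-verified Lean document; each statement's English description precedes it below -/
import Mathlib

section
/- The measure μ with density (1+xy)^(-2) is invariant under the simultaneous action (x,y) ↦ (M·x, (Mᵀ)⁻¹·y) for any M ∈ GL₂(ℝ): for a rectangle [x₁,x₂]×[y₁,y₂] with all corner values 1+x_iy_j > 0, μ(M·[x₁,x₂] × (Mᵀ)⁻¹·[y₁,y₂]) = μ([x₁,x₂]×[y₁,y₂]), provided the images are again rectangles with positive corner quantities. -/
open Matrix

/-- Möbius action of a 2×2 real matrix on ℝ. -/
noncomputable def mob (M : Matrix (Fin 2) (Fin 2) ℝ) (x : ℝ) : ℝ :=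
  (M 0 0 * x + M 0 1) / (M 1 0 * x + M 1 1)

/-- The measure of the rectangle [x₁,x₂]×[y₁,y₂] with respect to the density (1+xy)⁻². -/
noncomputable def muRect (x₁ x₂ y₁ y₂ : ℝ) : ℝ :=
  Real.log ((1 + x₁ * y₁) * (1 + x₂ * y₂) / ((1 + x₁ * y₂) * (1 + x₂ * y₁)))

/-!
Writing `M = !![a, b; c, d]`, one has
`1 + (M·x) ((Mᵀ)⁻¹·y) = det M (1 + x y) / ((c x + d) (a - b y))`.
So the action multiplies each corner quantity `1 + x y` by a constant times a factor depending
on `x` only times a factor depending on `y` only, and all such factors cancel in the cross ratio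
`(1 + x₁y₁)(1 + x₂y₂) / ((1 + x₁y₂)(1 + x₂y₁))` whose logarithm is `μ`.
-/

lemma mob_smul {c : ℝ} (hc : c ≠ 0) (N : Matrix (Fin 2) (Fin 2) ℝ) (x : ℝ) :
    mob (c • N) x = mob N x := by
  simp only [mob, Matrix.smul_apply, smul_eq_mul, mul_assoc, ← mul_add]
  exact mul_div_mul_left _ _ hc

lemma inv_transpose_fin_two (M : Matrix (Fin 2) (Fin 2) ℝ) :
    (Mᵀ)⁻¹ = M.det⁻¹ • !![M 1 1, -M 1 0; -M 0 1, M 0 0] := by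
  rw [inv_def, det_transpose, ← adjugate_transpose, adjugate_fin_two, Ring.inverse_eq_inv']
  ext i j
  fin_cases i <;> fin_cases j <;> rfl

lemma inv_transpose_denom (M : Matrix (Fin 2) (Fin 2) ℝ) (y : ℝ) :
    (Mᵀ)⁻¹ 1 0 * y + (Mᵀ)⁻¹ 1 1 = M.det⁻¹ * (M 0 0 - M 0 1 * y) := by
  simp only [inv_transpose_fin_two, Matrix.smul_apply, smul_eq_mul, of_apply, cons_val',
    cons_val_one, cons_val_zero, cons_val_fin_one]
  ring

lemma mob_inv_transpose {M : Matrix (Fin 2) (Fin 2) ℝ} (hM : M.det ≠ 0) (y : ℝ) :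
    mob (Mᵀ)⁻¹ y = (M 1 1 * y - M 1 0) / (M 0 0 - M 0 1 * y) := by
  rw [inv_transpose_fin_two, mob_smul (inv_ne_zero hM)]
  simp only [mob, of_apply, cons_val', cons_val_one, cons_val_zero, cons_val_fin_one]
  ring

lemma one_add_mob_mul_mob_inv_transpose {M : Matrix (Fin 2) (Fin 2) ℝ} (hM : M.det ≠ 0)
    {x y : ℝ} (hd : M 1 0 * x + M 1 1 ≠ 0) (he : M 0 0 - M 0 1 * y ≠ 0) :
    1 + mob M x * mob (Mᵀ)⁻¹ y
      = M.det * (1 + x * y) / ((M 1 0 * x + M 1 1) * (M 0 0 - M 0 1 * y)) := by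
  rw [mob_inv_transpose hM, mob, det_fin_two, div_mul_div_comm, one_add_div (mul_ne_zero hd he)]
  congr 1
  ring

lemma cross_ratio_mul_separable {K : Type*} [Field K] {c d₁ d₂ e₁ e₂ : K} (hc : c ≠ 0)
    (hd₁ : d₁ ≠ 0) (hd₂ : d₂ ≠ 0) (he₁ : e₁ ≠ 0) (he₂ : e₂ ≠ 0) (a₁₁ a₁₂ a₂₁ a₂₂ : K) :
    c * a₁₁ / (d₁ * e₁) * (c * a₂₂ / (d₂ * e₂)) / (c * a₁₂ / (d₁ * e₂) * (c * a₂₁ / (d₂ * e₁)))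
      = a₁₁ * a₂₂ / (a₁₂ * a₂₁) := by
  have hk : c ^ 2 / (d₁ * d₂ * e₁ * e₂) ≠ 0 := by positivity
  have hnum : c * a₁₁ / (d₁ * e₁) * (c * a₂₂ / (d₂ * e₂))
      = c ^ 2 / (d₁ * d₂ * e₁ * e₂) * (a₁₁ * a₂₂) := by
    field_simp
  have hden : c * a₁₂ / (d₁ * e₂) * (c * a₂₁ / (d₂ * e₁))
      = c ^ 2 / (d₁ * d₂ * e₁ * e₂) * (a₁₂ * a₂₁) := by
    field_simp
  rw [hnum, hden, mul_div_mul_left _ _ hk]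

theorem mu_invariant_general (M : Matrix (Fin 2) (Fin 2) ℝ) (hM : M.det ≠ 0)
    (x₁ x₂ y₁ y₂ : ℝ)
    (hd1 : M 1 0 * x₁ + M 1 1 ≠ 0) (hd2 : M 1 0 * x₂ + M 1 1 ≠ 0)
    (he1 : (Mᵀ)⁻¹ 1 0 * y₁ + (Mᵀ)⁻¹ 1 1 ≠ 0) (he2 : (Mᵀ)⁻¹ 1 0 * y₂ + (Mᵀ)⁻¹ 1 1 ≠ 0) :
    muRect (mob M x₁) (mob M x₂) (mob (Mᵀ)⁻¹ y₁) (mob (Mᵀ)⁻¹ y₂)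
      = muRect x₁ x₂ y₁ y₂ := by
  rw [inv_transpose_denom] at he1 he2
  have hE1 := right_ne_zero_of_mul he1
  have hE2 := right_ne_zero_of_mul he2
  unfold muRect
  rw [one_add_mob_mul_mob_inv_transpose hM hd1 hE1, one_add_mob_mul_mob_inv_transpose hM hd2 hE2,
    one_add_mob_mul_mob_inv_transpose hM hd1 hE2, one_add_mob_mul_mob_inv_transpose hM hd2 hE1,
    cross_ratio_mul_separable hM hd1 hd2 hE1 hE2]

/-- Invariance of the measure with density (1+xy)⁻² under the simultaneous action
(x,y) ↦ (M·x, (Mᵀ)⁻¹·y) for M ∈ GL₂(ℝ): the measure of the image rectangle (with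
corners the images of the original corners, all corner quantities positive) equals
the measure of the original rectangle. -/
theorem mu_invariant (M : Matrix (Fin 2) (Fin 2) ℝ) (hM : M.det ≠ 0)
    (x₁ x₂ y₁ y₂ : ℝ) (hx : x₁ ≤ x₂) (hy : y₁ ≤ y₂)
    (h11 : 0 < 1 + x₁ * y₁) (h12 : 0 < 1 + x₁ * y₂)
    (h21 : 0 < 1 + x₂ * y₁) (h22 : 0 < 1 + x₂ * y₂)
    (hd1 : M 1 0 * x₁ + M 1 1 ≠ 0) (hd2 : M 1 0 * x₂ + M 1 1 ≠ 0)
    (he1 : (Mᵀ)⁻¹ 1 0 * y₁ + (Mᵀ)⁻¹ 1 1 ≠ 0) (he2 : (Mᵀ)⁻¹ 1 0 * y₂ + (Mᵀ)⁻¹ 1 1 ≠ 0)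
    (H11 : 0 < 1 + mob M x₁ * mob (Mᵀ)⁻¹ y₁) (H12 : 0 < 1 + mob M x₁ * mob (Mᵀ)⁻¹ y₂)
    (H21 : 0 < 1 + mob M x₂ * mob (Mᵀ)⁻¹ y₁) (H22 : 0 < 1 + mob M x₂ * mob (Mᵀ)⁻¹ y₂) :
    muRect (mob M x₁) (mob M x₂) (mob (Mᵀ)⁻¹ y₁) (mob (Mᵀ)⁻¹ y₂)
      = muRect x₁ x₂ y₁ y₂ :=
  mu_invariant_general M hM x₁ x₂ y₁ y₂ hd1 hd2 he1 he2
end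

section
/- For n ≥ 1, the matrix identity M_{(−1:2)}^{n−1} = W · M_{(+1:n)} · E^{−1} holds, where W = [[1,0],[−1,−1]], E = [[1,−1],[0,1]], M_{(−1:2)} = [[2,1],[−1,0]] and M_{(+1:n)} = [[n,−1],[−1,0]]. -/
/-! M_{(−1:2)} = 1 + N with N = [[1,1],[−1,−1]] and N² = 0, so M_{(−1:2)}^k = 1 + kN is affine in k;
for k = n − 1 this is the matrix [[n, n−1],[1−n, 2−n]], which is also W · M_{(+1:n)} · E⁻¹. -/

open Matrix

lemma one_add_pow_of_mul_self_eq_zero {R : Type*} [Ring R] {N : R} (hN : N * N = 0) (k : ℕ) :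
    (1 + N) ^ k = 1 + k • N := by
  induction k with
  | zero => simp
  | succ k ih =>
    rw [pow_succ, ih, mul_add, mul_one, add_mul, one_mul, smul_mul_assoc, hN, smul_zero,
      add_zero, succ_nsmul, add_assoc]

lemma pow_M_neg_one_two (k : ℕ) :
    (!![2, 1; -1, 0] : Matrix (Fin 2) (Fin 2) ℤ) ^ k = !![(k : ℤ) + 1, k; -k, 1 - k] := by
  have hM : (!![2, 1; -1, 0] : Matrix (Fin 2) (Fin 2) ℤ) = 1 + !![1, 1; -1, -1] := by
    rw [one_fin_two]; ext i j; fin_cases i <;> fin_cases j <;> rfl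
  have hN : (!![1, 1; -1, -1] : Matrix (Fin 2) (Fin 2) ℤ) * !![1, 1; -1, -1] = 0 := by
    simp [← Matrix.ext_iff, Fin.forall_fin_two]
  rw [hM, one_add_pow_of_mul_self_eq_zero hN, one_fin_two]
  ext i j
  fin_cases i <;> fin_cases j <;> simp <;> ring

/-- For n ≥ 1, M_{(−1:2)}^{n−1} = W · M_{(+1:n)} · E⁻¹, where
W = [[1,0],[−1,−1]], M_{(+1:n)} = [[n,−1],[−1,0]] and E⁻¹ = [[1,1],[0,1]]. -/
theorem pow_M_neg_one_two_eq (n : ℕ) (hn : 1 ≤ n) :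
    (!![2, 1; -1, 0] : Matrix (Fin 2) (Fin 2) ℤ) ^ (n - 1)
      = !![1, 0; -1, -1] * !![(n : ℤ), -1; -1, 0] * !![1, 1; 0, 1] := by
  obtain ⟨k, rfl⟩ := Nat.exists_eq_add_of_le' hn
  rw [Nat.add_sub_cancel, pow_M_neg_one_two, mul_fin_two, mul_fin_two]
  ext i j
  fin_cases i <;> fin_cases j <;> simp
  ring
end

section
/- For integers d ≥ 2, n ≥ 1, d′ ≥ 3, the matrix identity M_{(−1:d′)} · M_{(−1:2)}^{n−1} · M_{(+1:d)} = M_{(+1:d′−1)} · M_{(+1:n)} · M_{(+1:d−1)} holds, where M_{(ε:m)} = (−1)·[[−m, ε],[1,0]]. -/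
/-- M_{(ε:m)} = (−1)·[[−m, ε],[1,0]] = [[m, −ε],[−1, 0]]. -/
def Mdig (ε m : ℤ) : Matrix (Fin 2) (Fin 2) ℤ := !![m, -ε; -1, 0]

/-! The power of `M_{(−1:2)}` has the closed form `[[k+1, k], [−k, 1−k]]`; with it both sides
become explicit `2 × 2` matrices whose entries are polynomials in `d`, `d'` and `n` that agree. -/

theorem Mdig_neg_one_two_pow (k : ℕ) :
    Mdig (-1) 2 ^ k = !![(k : ℤ) + 1, k; -k, 1 - k] := by
  induction k with
  | zero => simp [Matrix.one_fin_two]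
  | succ k ih =>
    rw [pow_succ, ih, Mdig, Matrix.mul_fin_two]
    push_cast
    ext i j
    fin_cases i <;> fin_cases j <;> simp <;> ring

theorem rewrite_identity_general (d d' : ℤ) (n : ℕ) (hn : 1 ≤ n) :
    Mdig (-1) d' * Mdig (-1) 2 ^ (n - 1) * Mdig 1 d
      = Mdig 1 (d' - 1) * Mdig 1 (n : ℤ) * Mdig 1 (d - 1) := by
  obtain ⟨k, rfl⟩ := Nat.exists_eq_add_of_le' hn
  rw [Nat.add_sub_cancel, Mdig_neg_one_two_pow]
  simp only [Mdig, Matrix.mul_fin_two]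
  push_cast
  ext i j
  fin_cases i <;> fin_cases j <;> simp <;> ring

/-- For d ≥ 2, n ≥ 1, d′ ≥ 3:
M_{(−1:d′)} · M_{(−1:2)}^{n−1} · M_{(+1:d)} = M_{(+1:d′−1)} · M_{(+1:n)} · M_{(+1:d−1)}. -/
theorem rewrite_identity (d d' : ℤ) (n : ℕ) (hd : 2 ≤ d) (hn : 1 ≤ n) (hd' : 3 ≤ d') :
    Mdig (-1) d' * Mdig (-1) 2 ^ (n - 1) * Mdig 1 d
      = Mdig 1 (d' - 1) * Mdig 1 (n : ℤ) * Mdig 1 (d - 1) :=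
  rewrite_identity_general d d' n hn
end

section
/- Let α ∈ (0,1], x ∈ [α−1, α] nonzero, and let (ε′, d′) with ε′ ∈ {±1}, d′ a positive integer. If |T_α(x) − (ε′/x − d′)| < 1, then T_α(x) = ε′/x − d′, ε′ = sign(x), and d′ = d_α(x). -/
/-- The digit of x under the α-continued fraction map: d_α(x) = ⌊|1/x| + 1 − α⌋. -/
noncomputable def dCF (α x : ℝ) : ℤ := ⌊|1/x| + 1 - α⌋

/-- The α-continued fraction map T_α on [α−1, α]. -/
noncomputable def TCF (α x : ℝ) : ℝ := if x = 0 then 0 else |1/x| - ⌊|1/x| + 1 - α⌋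

/-- The sign ε(x) (taking the value +1 at 0). -/
noncomputable def epsCF (x : ℝ) : ℝ := if 0 ≤ x then 1 else -1

/-- If (ε′:d′) is a digit in the alphabet and |T_α(x) − (ε′/x − d′)| < 1, then
T_α(x) = ε′/x − d′, ε′ = ε(x) and d′ = d_α(x). -/
theorem digit_determined (α x : ℝ) (hα : α ∈ Set.Ioc (0:ℝ) 1)
    (hx : x ∈ Set.Icc (α - 1) α) (hx0 : x ≠ 0)
    (ε' : ℝ) (d' : ℤ) (hε' : ε' = 1 ∨ ε' = -1) (hd' : 1 ≤ d') (hd'2 : ε' = -1 → 2 ≤ d')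
    (h : |TCF α x - (ε' / x - d')| < 1) :
    TCF α x = ε' / x - d' ∧ ε' = epsCF x ∧ d' = dCF α x := by
  obtain ⟨hα0, hα1⟩ := hα
  obtain ⟨hxl, hxr⟩ := hx
  set d : ℤ := dCF α x with hdd
  have hT : TCF α x = |1/x| - d := by simp [TCF, dCF, hx0, hdd]
  have hfl : (d : ℝ) ≤ |1/x| + 1 - α := Int.floor_le _
  have hlt := abs_lt.mp h
  rcases hx0.lt_or_gt with hneg | hpos
  · -- x < 0
    have he : epsCF x = -1 := by simp [epsCF, not_le.mpr hneg]
    have hy : |1/x| = -(1/x) := abs_of_neg (one_div_neg.mpr hneg)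
    have hα1' : α < 1 := by linarith
    have hylb : 1/(1-α) ≤ |1/x| := by
      rw [hy]
      have hnx : 0 < -x := by linarith
      have : 1/(1-α) ≤ 1/(-x) := by
        apply one_div_le_one_div_of_le hnx; linarith
      calc 1/(1-α) ≤ 1/(-x) := this
        _ = -(1/x) := by field_simp
    have hy1 : 1 < |1/x| := by
      have : 1 < 1/(1-α) := by
        rw [lt_div_iff₀ (by linarith)]; linarith
      linarith
    rcases hε' with h1 | h1
    · -- ε' = 1, mismatch: contradiction
      exfalso
      have hεx : ε' / x = -(|1/x|) := by rw [h1, hy]; ring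
      have hd'R : (1:ℝ) ≤ (d':ℝ) := by exact_mod_cast hd'
      rw [hT, hεx] at hlt
      linarith [hlt.2]
    · -- ε' = -1, matched
      have hεx : ε' / x = |1/x| := by rw [h1, hy]; ring
      have hdiff : TCF α x - (ε' / x - d') = ((d' - d : ℤ) : ℝ) := by
        rw [hT, hεx]; push_cast; ring
      have h2 : |((d' - d : ℤ) : ℝ)| < 1 := by rw [← hdiff]; exact h
      have h3 : |d' - d| < 1 := by exact_mod_cast h2
      have h4 : d' = d := by have := abs_lt.mp h3; omega
      refine ⟨by rw [hT, hεx, h4], by rw [h1, he], h4⟩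
  · -- x > 0
    have he : epsCF x = 1 := by simp [epsCF, le_of_lt hpos]
    have hy : |1/x| = 1/x := abs_of_pos (one_div_pos.mpr hpos)
    have hy1 : 1 ≤ |1/x| := by
      rw [hy]
      have : 1/α ≤ 1/x := one_div_le_one_div_of_le hpos hxr
      have h1α : 1 ≤ 1/α := by rw [le_div_iff₀ hα0]; linarith
      linarith
    rcases hε' with h1 | h1
    · -- ε' = 1, matched
      have hεx : ε' / x = |1/x| := by rw [h1, hy]
      have hdiff : TCF α x - (ε' / x - d') = ((d' - d : ℤ) : ℝ) := by
        rw [hT, hεx]; push_cast; ring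
      have h2 : |((d' - d : ℤ) : ℝ)| < 1 := by rw [← hdiff]; exact h
      have h3 : |d' - d| < 1 := by exact_mod_cast h2
      have h4 : d' = d := by have := abs_lt.mp h3; omega
      refine ⟨by rw [hT, hεx, h4], by rw [h1, he], h4⟩
    · -- ε' = -1, mismatch: contradiction
      exfalso
      have hεx : ε' / x = -(|1/x|) := by rw [h1, hy]; ring
      have hd2 : (2:ℝ) ≤ (d':ℝ) := by exact_mod_cast hd'2 h1
      rw [hT, hεx] at hlt
      linarith [hlt.2]
end

section
/- Let α ∈ (0,1] and x ∈ [α−1, α] with W·x := x/(−x−1) also in [α−1, α]. Then T_α(W·x) = T_α(x), and the digit of W·x equals the W-transform of the digit of x: (ε(W·x), d_α(W·x)) = (−ε(x), d_α(x) + ε(x)) if x ≠ 0. -/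
/-- The sign ε(x) (taking the value +1 at 0), as an integer. -/
noncomputable def epsZ (x : ℝ) : ℤ := if 0 ≤ x then 1 else -1

/-- The Möbius action of W = [[1,0],[−1,−1]]: W·x = x/(−x−1). -/
noncomputable def mobW (x : ℝ) : ℝ := x / (-x - 1)

/-- If x and W·x both lie in [α−1,α], then T_α(W·x) = T_α(x), and (for x ≠ 0) the
digit of W·x is the W-transform of the digit of x:
ε(W·x) = −ε(x) and d_α(W·x) = d_α(x) + ε(x). -/
theorem W_transform (α x : ℝ) (hα : α ∈ Set.Ioc (0:ℝ) 1)
    (hx : x ∈ Set.Icc (α - 1) α) (hWx : mobW x ∈ Set.Icc (α - 1) α) :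
    TCF α (mobW x) = TCF α x ∧
    (x ≠ 0 → epsZ (mobW x) = -epsZ x ∧ dCF α (mobW x) = dCF α x + epsZ x) := by
  obtain ⟨hα0, hα1⟩ := hα
  obtain ⟨hxl, hxu⟩ := hx
  by_cases hx0 : x = 0
  · subst hx0
    simp [mobW, TCF]
  · have hx1 : -1 < x := by linarith
    have hden : -x - 1 < 0 := by linarith
    have hW : mobW x ≠ 0 := div_ne_zero hx0 (ne_of_lt hden)
    have hinv : 1 / mobW x = -1 - 1/x := by
      unfold mobW
      field_simp
    have hmul : x * (1/x) = 1 := mul_one_div_cancel hx0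
    have key : |1/(mobW x)| = |1/x| + (epsZ x : ℝ) ∧ epsZ (mobW x) = -epsZ x := by
      rcases lt_or_gt_of_ne hx0 with hneg | hpos
      · have he : epsZ x = -1 := by simp [epsZ, not_le.mpr hneg]
        have h1x : 1/x < -1 := by nlinarith
        have hWpos : 0 < mobW x := div_pos_of_neg_of_neg hneg hden
        constructor
        · rw [hinv, abs_of_pos (by linarith), abs_of_neg (by linarith : 1/x < 0), he]
          push_cast; ring
        · rw [he]
          simp [epsZ, hWpos.le]
      · have he : epsZ x = 1 := by simp [epsZ, hpos.le]
        have h1x : 0 < 1/x := by positivity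
        have hWneg : mobW x < 0 := div_neg_of_pos_of_neg hpos hden
        constructor
        · rw [hinv, abs_of_neg (by linarith), abs_of_pos h1x, he]
          push_cast; ring
        · rw [he]
          simp [epsZ, not_le.mpr hWneg]
    obtain ⟨habs, hsgn⟩ := key
    have hfl : ⌊|1/(mobW x)| + 1 - α⌋ = ⌊|1/x| + 1 - α⌋ + epsZ x := by
      rw [habs]
      have h : |1/x| + (epsZ x:ℝ) + 1 - α = (|1/x| + 1 - α) + ((epsZ x : ℤ):ℝ) := by
        push_cast; ring
      rw [h, Int.floor_add_intCast]
    have hd : dCF α (mobW x) = dCF α x + epsZ x := hfl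
    refine ⟨?_, fun _ => ⟨hsgn, hd⟩⟩
    unfold TCF
    rw [if_neg hW, if_neg hx0, habs]
    have h2 : |1/x| + (epsZ x:ℝ) + 1 - α = (|1/x| + 1 - α) + ((epsZ x : ℤ):ℝ) := by
      push_cast; ring
    rw [h2, Int.floor_add_intCast]
    push_cast
    ring
end

section
/- Let α ∈ (0,1] and x ∈ [α−1, α]. Then the α-continued-fraction expansion of x contains no run of d_α(α) consecutive digits equal to (−1:2); i.e., there is no m ≥ 0 such that T_α^n(x) has sign −1 and digit 2 for all m ≤ n < m + d_α(α). -/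
/-- The α-expansion of any x ∈ [α−1,α] contains no run of d_α(α) consecutive
digits (−1:2): there is no m ≥ 0 such that, for all m ≤ n < m + d_α(α),
T_α^n(x) < 0 and d_α(T_α^n(x)) = 2. -/
theorem no_long_run_of_minus_two (α x : ℝ) (hα : α ∈ Set.Ioc (0:ℝ) 1)
    (hx : x ∈ Set.Icc (α - 1) α) :
    ¬ ∃ m : ℕ, ∀ n : ℕ, m ≤ n → (n : ℤ) < (m : ℤ) + dCF α α →
      (TCF α)^[n] x < 0 ∧ dCF α ((TCF α)^[n] x) = 2 := by
  obtain ⟨hα0, hα1⟩ := hα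
  rintro ⟨m, hrun⟩
  set d : ℤ := dCF α α with hd
  have habs : |1/α| = 1/α := abs_of_pos (by positivity)
  have hdval : d = ⌊1/α + 1 - α⌋ := by rw [hd]; unfold dCF; rw [habs]
  have hinvα : 1/α * α = 1 := one_div_mul_cancel (ne_of_gt hα0)
  have hd1 : 1 ≤ d := by
    rw [hdval]
    refine Int.le_floor.2 ?_
    push_cast
    have : α ≤ 1/α := by rw [le_div_iff₀ hα0]; nlinarith
    linarith
  have hd1r : (1:ℝ) ≤ (d:ℝ) := by exact_mod_cast hd1
  have hdle : (d:ℝ) ≤ 1/α + 1 - α := by rw [hdval]; exact Int.floor_le _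
  have hdgt : 1/α + 1 - α < d + 1 := by rw [hdval]; exact Int.lt_floor_add_one _
  have hdub : (d:ℝ)*α ≤ 1 + α - α^2 := by nlinarith [hdle, hα0, hinvα]
  have hTα : 1 - α^2 < (d:ℝ)*α := by nlinarith [hdgt, hα0, hinvα]
  set D : ℕ := d.toNat with hDdef
  have hD : (D:ℤ) = d := Int.toNat_of_nonneg (by linarith)
  have hD1 : 1 ≤ D := by omega
  -- T always maps into [α-1, ∞)
  have hrange : ∀ y : ℝ, α - 1 ≤ TCF α y := by
    intro y
    unfold TCF
    split
    · linarith
    · have := Int.floor_le (|1/y| + 1 - α); linarith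
  -- the run, reindexed
  have h1 : ∀ k : ℕ, k < D → (TCF α)^[m+k] x < 0 ∧ dCF α ((TCF α)^[m+k] x) = 2 := by
    intro k hk
    refine hrun (m+k) (Nat.le_add_right _ _) ?_
    have : (k:ℤ) < d := by omega
    push_cast
    linarith
  -- consequences of a digit (−1:2)
  have hdig : ∀ y : ℝ, y < 0 → dCF α y = 2 →
      TCF α y = -1/y - 2 ∧ y * (2+α) < -1 := by
    intro y hy h2
    have hy0 : y ≠ 0 := ne_of_lt hy
    unfold dCF at h2
    have hinv : |1/y| = -(1/y) := abs_of_neg (one_div_neg.2 hy)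
    constructor
    · unfold TCF
      rw [if_neg hy0, h2, hinv]
      push_cast; ring
    · have h3 : |1/y| + 1 - α < 2 + 1 := by
        have := Int.lt_floor_add_one (|1/y| + 1 - α)
        rw [h2] at this; push_cast at this; linarith
      have h4 : -(1/y) < 2 + α := by rw [hinv] at h3; linarith
      have hy' : (0:ℝ) < -y := by linarith
      have hmul := mul_lt_mul_of_pos_right h4 hy'
      rw [neg_mul_neg, one_div_mul_cancel hy0] at hmul
      nlinarith [hmul]
  -- main induction
  have key : ∀ k : ℕ, k < D →
      (k:ℝ)*α + α - 1 ≤ ((TCF α)^[m+k] x) * (1 - (k:ℝ)*α) := by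
    intro k
    induction k with
    | zero =>
      intro _
      simp only [Nat.cast_zero, zero_mul, zero_add, mul_one, sub_zero, Nat.add_zero]
      cases m with
      | zero => exact hx.1
      | succ j =>
        rw [Function.iterate_succ_apply']
        linarith [hrange ((TCF α)^[j] x)]
    | succ k ih =>
      intro hk1
      have hk : k < D := Nat.lt_of_succ_lt hk1
      have ihk := ih hk
      obtain ⟨hyneg, hydig⟩ := h1 k hk
      obtain ⟨hrec, hprod⟩ := hdig _ hyneg hydig
      set y := (TCF α)^[m+k] x with hy
      have hy0 : y ≠ 0 := ne_of_lt hyneg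
      have hstep : (TCF α)^[m+(k+1)] x = -1/y - 2 := by
        rw [show m+(k+1) = (m+k)+1 by ring, Function.iterate_succ_apply', ← hy, hrec]
      rw [hstep]
      push_cast
      -- goal: (k+1)α + α - 1 ≤ (-1/y - 2) * (1 - (k+1)α)
      rcases le_or_gt (((k:ℝ)+1)*α + α - 1) ((-1/y - 2) * (1 - ((k:ℝ)+1)*α)) with h | h
      · exact h
      · exfalso
        have hmul := mul_lt_mul_of_neg_left h hyneg
        have hyy : y * (1/y) = 1 := mul_one_div_cancel hy0
        have hre : y * ((-1/y - 2) * (1 - ((k:ℝ)+1)*α)) = (-1-2*y)*(1-((k:ℝ)+1)*α) := by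
          linear_combination (-(1 - ((k:ℝ)+1)*α)) * hyy
        rw [hre] at hmul
        nlinarith [ihk, hmul]
  -- final contradiction at k = D - 1
  have hDk : D - 1 < D := by omega
  have hkey := key (D-1) hDk
  obtain ⟨hyneg, hydig⟩ := h1 (D-1) hDk
  obtain ⟨-, hprod⟩ := hdig _ hyneg hydig
  set y := (TCF α)^[m+(D-1)] x with hy
  have hcast : ((D-1:ℕ):ℝ) = (d:ℝ) - 1 := by
    have : ((D-1:ℕ):ℤ) = d - 1 := by omega
    exact_mod_cast this
  rw [hcast] at hkey
  -- hkey : (d-1)α + α - 1 ≤ y*(1-(d-1)α);  hprod : y*(2+α) < -1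
  have hpos : 0 < 1 + α - (d:ℝ)*α := by nlinarith [hdub]
  have h2α : (0:ℝ) < 2 + α := by linarith
  have h5 := mul_lt_mul_of_pos_right hprod hpos
  have h6 := mul_le_mul_of_nonneg_right hkey (le_of_lt h2α)
  nlinarith [h5, h6, hTα, mul_nonneg (by linarith : (0:ℝ) ≤ (d:ℝ)-1) (sq_nonneg α),
    hα0, sq_nonneg α]
end

section
/- Let α ∈ (0,1). If α is irrational with by-excess characteristic sequence a₁a₂a₃⋯ of α−1, then α = [0; a₁, a₂, a₃, …] (regular continued fraction). Concretely: if α−1 has by-excess expansion (all partial maps x ↦ −1/x − d with d ≥ 2) encoded as (−1:2)^{a₁−1}(−1:2+a₂)(−1:2)^{a₃−1}(−1:2+a₄)⋯, then the RCF partial quotients of α are exactly a₁, a₂, a₃, …. -/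
/-- The Gauss map (regular continued fraction map). -/
noncomputable def gaussMap (x : ℝ) : ℝ := if x = 0 then 0 else Int.fract (1/x)

/-- Starting position of the k-th block of the by-excess digit string associated to the
characteristic sequence a (0-indexed: a n is a_{n+1}); block k consists of a(2k)−1
digits (−1:2) followed by one digit (−1:2+a(2k+1)), so it has length a(2k). -/
def blockStart (a : ℕ → ℕ) (k : ℕ) : ℕ := ∑ i ∈ Finset.range k, a (2 * i)

/-- `a` (a sequence of positive integers) is the characteristic sequence of x:
the by-excess expansion of x is (−1:2)^{a₁−1}(−1:2+a₂)(−1:2)^{a₃−1}(−1:2+a₄)⋯. -/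
def IsCharSeq (x : ℝ) (a : ℕ → ℕ) : Prop :=
  (∀ n, 1 ≤ a n) ∧
  (∀ k j : ℕ, j + 1 < a (2 * k) →
    dCF 0 ((TCF 0)^[blockStart a k + j] x) = 2) ∧
  (∀ k : ℕ,
    dCF 0 ((TCF 0)^[blockStart a k + (a (2 * k) - 1)] x) = 2 + (a (2 * k + 1) : ℤ))

/-!
For `x ∈ (0,1)` write `t = 1/x`. Since `-1/(t⁻¹ - 1) = 1 + (t - 1)⁻¹`, the by-excess map
sends `t⁻¹ - 1` to `fract (t - 1)⁻¹ - 1` with digit `2 + ⌊(t - 1)⁻¹⌋`: while `t > 2` it emits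
the digit `2` and replaces `t` by `t - 1`. Starting from `x - 1` it thus emits `⌊1/x⌋ - 1`
digits `2` and reaches `(1 + G x)⁻¹ - 1`, `G` the Gauss map; the next digit is `2 + ⌊1/G x⌋`
and the orbit lands on `G (G x) - 1`. Hence the block `(−1:2)^{a₂ₖ₋₁−1}(−1:2+a₂ₖ)`, which
starts at the point `G^{2k-2} α - 1` of the orbit, forces `a₂ₖ₋₁ = ⌊1/G^{2k-2} α⌋` and
`a₂ₖ = ⌊1/G^{2k-1} α⌋`, and the next block starts at `G^{2k} α - 1`.
-/

open Set Function

section ByExcessMap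

variable {t : ℝ}

lemma abs_one_div_inv_sub_one (ht : 1 < t) : |1 / (t⁻¹ - 1)| = (t - 1)⁻¹ + 1 := by
  have h : 1 / (t⁻¹ - 1) < 0 := one_div_neg.2 (sub_neg.2 (inv_lt_one_of_one_lt₀ ht))
  have ht₀ : t ≠ 0 := by positivity
  have ht₁ : 1 - t ≠ 0 := by linarith
  have ht₁' : t - 1 ≠ 0 := by linarith
  rw [abs_of_neg h]
  field_simp
  ring

lemma dCF_zero_inv_sub_one (ht : 1 < t) : dCF 0 (t⁻¹ - 1) = ⌊(t - 1)⁻¹⌋ + 2 := by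
  rw [dCF, abs_one_div_inv_sub_one ht, sub_zero, add_assoc, one_add_one_eq_two,
    Int.floor_add_ofNat]

lemma TCF_zero_inv_sub_one (ht : 1 < t) : TCF 0 (t⁻¹ - 1) = Int.fract (t - 1)⁻¹ - 1 := by
  have h : t⁻¹ - 1 ≠ 0 := (sub_neg.2 (inv_lt_one_of_one_lt₀ ht)).ne
  rw [TCF, if_neg h, abs_one_div_inv_sub_one ht, sub_zero, add_assoc, one_add_one_eq_two,
    Int.floor_add_ofNat, Int.fract]
  push_cast
  ring

lemma TCF_zero_iterate_inv_sub_one {j : ℕ} (hj : j + 1 < t) :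
    (TCF 0)^[j] (t⁻¹ - 1) = (t - j)⁻¹ - 1 := by
  induction j with
  | zero => simp
  | succ j ih =>
    push_cast at hj ⊢
    have hfract : Int.fract (t - j - 1)⁻¹ = (t - j - 1)⁻¹ :=
      Int.fract_eq_self.2 ⟨inv_nonneg.2 (by linarith), inv_lt_one_of_one_lt₀ (by linarith)⟩
    rw [iterate_succ_apply', ih (by linarith), TCF_zero_inv_sub_one (by linarith), hfract,
      sub_sub]

lemma dCF_zero_iterate_inv_sub_one {j : ℕ} (hj : j + 2 < t) :
    dCF 0 ((TCF 0)^[j] (t⁻¹ - 1)) = 2 := by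
  have hfloor : ⌊(t - j - 1)⁻¹⌋ = 0 :=
    Int.floor_eq_zero_iff.2 ⟨inv_nonneg.2 (by linarith), inv_lt_one_of_one_lt₀ (by linarith)⟩
  rw [TCF_zero_iterate_inv_sub_one (by linarith), dCF_zero_inv_sub_one (by linarith), hfloor,
    zero_add]

end ByExcessMap

lemma gaussMap_eq_fract_inv (x : ℝ) : gaussMap x = Int.fract x⁻¹ := by
  rw [gaussMap, one_div]
  split_ifs with h <;> simp [h]

section GaussMap

variable {x : ℝ}

lemma irrational_gaussMap (h : Irrational x) : Irrational (gaussMap x) := by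
  rw [gaussMap_eq_fract_inv, Int.fract]
  exact h.inv.sub_intCast _

lemma gaussMap_mem_Ioo_of_irrational (h : Irrational x) : gaussMap x ∈ Ioo 0 1 := by
  have hne : gaussMap x ≠ 0 := by exact_mod_cast (irrational_gaussMap h).ne_nat 0
  rw [gaussMap_eq_fract_inv] at hne ⊢
  exact ⟨(Int.fract_nonneg _).lt_of_ne hne.symm, Int.fract_lt_one _⟩

lemma irrational_gaussMap_iterate (h : Irrational x) (n : ℕ) : Irrational (gaussMap^[n] x) := by
  induction n with
  | zero => exact h
  | succ n ih => rw [iterate_succ_apply']; exact irrational_gaussMap ih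

lemma gaussMap_iterate_mem_Ioo (hx : x ∈ Ioo 0 1) (h : Irrational x) (n : ℕ) :
    gaussMap^[n] x ∈ Ioo 0 1 := by
  cases n with
  | zero => exact hx
  | succ n =>
    rw [iterate_succ_apply']
    exact gaussMap_mem_Ioo_of_irrational (irrational_gaussMap_iterate h n)

end GaussMap

section Block

variable {x : ℝ}

lemma one_le_floor_inv (hx : x ∈ Ioo 0 1) : 1 ≤ ⌊x⁻¹⌋₊ :=
  Nat.le_floor (by simpa using (one_lt_inv₀ hx.1).2 hx.2 |>.le)

lemma natCast_floor_inv_lt (hx : 0 < x) (h : Irrational x) : (⌊x⁻¹⌋₊ : ℝ) < x⁻¹ :=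
  (Nat.floor_le (inv_nonneg.2 hx.le)).lt_of_ne (h.inv.ne_nat _).symm

lemma TCF_zero_iterate_floor_inv_sub_one (hx : x ∈ Ioo 0 1) (h : Irrational x) :
    (TCF 0)^[⌊x⁻¹⌋₊ - 1] (x - 1) = (gaussMap x + 1)⁻¹ - 1 := by
  have hA := one_le_floor_inv hx
  have hlt : ((⌊x⁻¹⌋₊ - 1 : ℕ) : ℝ) + 1 < x⁻¹ := by
    rw [Nat.cast_sub hA, Nat.cast_one, sub_add_cancel]
    exact natCast_floor_inv_lt hx.1 h
  have := TCF_zero_iterate_inv_sub_one hlt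
  rw [inv_inv] at this
  rw [this, gaussMap_eq_fract_inv, Int.fract, Nat.cast_sub hA,
    natCast_floor_eq_intCast_floor (inv_nonneg.2 hx.1.le)]
  ring_nf

lemma dCF_zero_iterate_floor_inv_sub_one (hx : x ∈ Ioo 0 1) (h : Irrational x) :
    dCF 0 ((TCF 0)^[⌊x⁻¹⌋₊ - 1] (x - 1)) = ⌊(gaussMap x)⁻¹⌋ + 2 := by
  have hg := gaussMap_mem_Ioo_of_irrational h
  rw [TCF_zero_iterate_floor_inv_sub_one hx h, dCF_zero_inv_sub_one (by linarith [hg.1]),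
    add_sub_cancel_right]

lemma TCF_zero_iterate_floor_inv (hx : x ∈ Ioo 0 1) (h : Irrational x) :
    (TCF 0)^[⌊x⁻¹⌋₊] (x - 1) = gaussMap (gaussMap x) - 1 := by
  have hg := gaussMap_mem_Ioo_of_irrational h
  rw [← Nat.sub_add_cancel (one_le_floor_inv hx), iterate_succ_apply',
    TCF_zero_iterate_floor_inv_sub_one hx h, TCF_zero_inv_sub_one (by linarith [hg.1]),
    add_sub_cancel_right, gaussMap_eq_fract_inv (gaussMap x)]

lemma dCF_zero_iterate_of_lt_floor_inv (hx : 0 < x) (h : Irrational x) {j : ℕ}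
    (hj : j + 1 < ⌊x⁻¹⌋₊) : dCF 0 ((TCF 0)^[j] (x - 1)) = 2 := by
  have hj' : (j : ℝ) + 2 < x⁻¹ :=
    lt_of_le_of_lt (by exact_mod_cast hj) (natCast_floor_inv_lt hx h)
  simpa using dCF_zero_iterate_inv_sub_one hj'

end Block

/-- The digit string of `z` begins with the block `(−1:2)^{m−1}(−1:2+n)`. -/
def IsByExcessBlock (z : ℝ) (m n : ℕ) : Prop :=
  (∀ j : ℕ, j + 1 < m → dCF 0 ((TCF 0)^[j] z) = 2) ∧
  dCF 0 ((TCF 0)^[m - 1] z) = 2 + (n : ℤ)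

lemma IsByExcessBlock.eq_floor {x : ℝ} {m n : ℕ} (hblock : IsByExcessBlock (x - 1) m n)
    (hx : x ∈ Ioo 0 1) (h : Irrational x) (hm : 1 ≤ m) (hn : 1 ≤ n) :
    m = ⌊x⁻¹⌋₊ ∧ (n : ℤ) = ⌊(gaussMap x)⁻¹⌋ := by
  obtain ⟨hinner, hlast⟩ := hblock
  have hend := dCF_zero_iterate_floor_inv_sub_one hx h
  rcases lt_trichotomy m ⌊x⁻¹⌋₊ with hlt | rfl | hgt
  · rw [dCF_zero_iterate_of_lt_floor_inv hx.1 h (by omega)] at hlast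
    omega
  · exact ⟨rfl, by omega⟩
  · have hg := gaussMap_mem_Ioo_of_irrational h
    have hfloor : 1 ≤ ⌊(gaussMap x)⁻¹⌋ :=
      Int.le_floor.2 (by exact_mod_cast ((one_lt_inv₀ hg.1).2 hg.2).le)
    rw [hinner _ (by have := one_le_floor_inv hx; omega)] at hend
    omega

lemma blockStart_succ (a : ℕ → ℕ) (k : ℕ) :
    blockStart a (k + 1) = a (2 * k) + blockStart a k := by
  rw [blockStart, blockStart, Finset.sum_range_succ, add_comm]

namespace IsCharSeq

variable {z : ℝ} {a : ℕ → ℕ}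

lemma isByExcessBlock (ha : IsCharSeq z a) (k : ℕ) :
    IsByExcessBlock ((TCF 0)^[blockStart a k] z) (a (2 * k)) (a (2 * k + 1)) := by
  obtain ⟨-, hinner, hlast⟩ := ha
  refine ⟨fun j hj => ?_, ?_⟩
  · rw [← iterate_add_apply, add_comm]
    exact hinner k j hj
  · rw [← iterate_add_apply, add_comm]
    exact hlast k

lemma TCF_zero_iterate_blockStart {α : ℝ} (ha : IsCharSeq (α - 1) a) (hα : α ∈ Ioo 0 1)
    (h : Irrational α) (k : ℕ) :
    (TCF 0)^[blockStart a k] (α - 1) = gaussMap^[2 * k] α - 1 := by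
  induction k with
  | zero => simp [blockStart]
  | succ k ih =>
    have hblock := ha.isByExcessBlock k
    rw [ih] at hblock
    have hx := gaussMap_iterate_mem_Ioo hα h (2 * k)
    have hirr := irrational_gaussMap_iterate h (2 * k)
    rw [blockStart_succ, iterate_add_apply, ih,
      (hblock.eq_floor hx hirr (ha.1 _) (ha.1 _)).1, TCF_zero_iterate_floor_inv hx hirr,
      mul_add, mul_one, iterate_succ_apply', iterate_succ_apply']

end IsCharSeq

/-- If α ∈ (0,1) is irrational and a₁a₂a₃⋯ is the characteristic sequence of the
by-excess expansion of α−1, then the regular continued fraction partial quotients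
of α are exactly a₁, a₂, a₃, …, i.e. the n-th partial quotient ⌊1/T₁ⁿ(α)⌋ is aₙ₊₁. -/
theorem charSeq_eq_RCF (α : ℝ) (hα : α ∈ Set.Ioo (0:ℝ) 1) (hirr : Irrational α)
    (a : ℕ → ℕ) (ha : IsCharSeq (α - 1) a) :
    ∀ n : ℕ, ⌊1 / (gaussMap^[n] α)⌋ = (a n : ℤ) := by
  have hquot (k : ℕ) : (a (2 * k) : ℤ) = ⌊(gaussMap^[2 * k] α)⁻¹⌋ ∧
      (a (2 * k + 1) : ℤ) = ⌊(gaussMap^[2 * k + 1] α)⁻¹⌋ := by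
    have hx := gaussMap_iterate_mem_Ioo hα hirr (2 * k)
    have hblock := ha.isByExcessBlock k
    rw [ha.TCF_zero_iterate_blockStart hα hirr k] at hblock
    obtain ⟨hm, hn⟩ := hblock.eq_floor hx (irrational_gaussMap_iterate hirr _) (ha.1 _) (ha.1 _)
    rw [hm, Int.natCast_floor_eq_floor (inv_nonneg.2 hx.1.le), iterate_succ_apply']
    exact ⟨rfl, hn⟩
  intro n
  rw [one_div]
  obtain ⟨k, rfl | rfl⟩ := Nat.even_or_odd' n
  · exact (hquot k).1.symm
  · exact (hquot k).2.symm
end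

section
/- Let α ∈ (0,1), x ∈ (0,α], and suppose T_α^m(x) > 0 for some m ≥ 1. Then there exists n ≥ 1 with T_α^m(x) = T₁^n(x), where T₁ is the Gauss map; i.e., every positive point in the T_α-orbit of x lies in the Gauss-map orbit of x. -/
/-!
For `t > 0`, `T_α t` is `G t` or `G t - 1` according as `G t < α` or not (`G` the Gauss map), and
`G t - 1 = (j + G (G t) + 1)⁻¹ - 1` with `j = ⌊1 / G t⌋ - 1`. A negative point `y = (u + 1)⁻¹ - 1`
has the same image as `u`, because `|1/y| = 1/u + 1` only shifts the floor by one. So, as the orbit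
stays above `α - 1`, the point `(j + g + 1)⁻¹ - 1` with `j ≥ 1` and `g` in the Gauss orbit goes to
`(j - 1 + g + 1)⁻¹ - 1` (an `α`-digit `-2`), and at `j = 0` the orbit resumes with `T_α g`. Every
point of the `T_α`-orbit after the first is therefore either in the Gauss orbit or one of these
nonpositive points.
-/

open Set

lemma gaussMap_of_ne_zero {t : ℝ} (ht : t ≠ 0) : gaussMap t = Int.fract t⁻¹ := by
  simp [gaussMap, ht]

lemma gaussMap_nonneg (t : ℝ) : 0 ≤ gaussMap t := by
  unfold gaussMap
  split_ifs
  exacts [le_rfl, Int.fract_nonneg _]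

lemma gaussMap_lt_one (t : ℝ) : gaussMap t < 1 := by
  unfold gaussMap
  split_ifs
  exacts [one_pos, Int.fract_lt_one _]

lemma natFloor_inv_add_gaussMap {g : ℝ} (hg : 0 < g) : (⌊g⁻¹⌋₊ : ℝ) + gaussMap g = g⁻¹ := by
  rw [gaussMap_of_ne_zero hg.ne', natCast_floor_eq_intCast_floor (inv_pos.2 hg).le,
    Int.floor_add_fract]

lemma TCF_of_pos {α t : ℝ} (ht : 0 < t) : TCF α t = t⁻¹ - ⌊t⁻¹ + 1 - α⌋ := by
  simp [TCF, ht.ne', abs_of_pos ht]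

lemma TCF_of_gaussMap_lt {α t : ℝ} (hα : α ≤ 1) (ht : 0 < t) (h : gaussMap t < α) :
    TCF α t = gaussMap t := by
  rw [gaussMap_of_ne_zero ht.ne'] at h ⊢
  have hfloor : ⌊t⁻¹ + 1 - α⌋ = ⌊t⁻¹⌋ := by
    rw [Int.floor_eq_iff]
    constructor <;> linarith [Int.floor_add_fract t⁻¹, Int.fract_nonneg t⁻¹]
  rw [TCF_of_pos ht, hfloor, Int.self_sub_floor]

lemma TCF_of_le_gaussMap {α t : ℝ} (hα : 0 ≤ α) (ht : 0 < t) (h : α ≤ gaussMap t) :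
    TCF α t = gaussMap t - 1 := by
  rw [gaussMap_of_ne_zero ht.ne'] at h ⊢
  have hfloor : ⌊t⁻¹ + 1 - α⌋ = ⌊t⁻¹⌋ + 1 := by
    rw [Int.floor_eq_iff]
    push_cast
    constructor <;> linarith [Int.floor_add_fract t⁻¹, Int.fract_lt_one t⁻¹]
  rw [TCF_of_pos ht, hfloor, Int.fract]
  push_cast
  ring

lemma TCF_of_one_le {α u : ℝ} (hα : 0 < α) (hu : 1 ≤ u) (h : α ≤ u⁻¹) : TCF α u = u⁻¹ - 1 := by
  have hfloor : ⌊u⁻¹ + 1 - α⌋ = 1 := by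
    rw [Int.floor_eq_iff]
    push_cast
    constructor <;> linarith [inv_le_one_of_one_le₀ hu]
  rw [TCF_of_pos (by linarith), hfloor, Int.cast_one]

lemma TCF_inv_add_one_sub_one (α : ℝ) {u : ℝ} (hu : 0 ≤ u) : TCF α ((u + 1)⁻¹ - 1) = TCF α u := by
  rcases hu.eq_or_lt with rfl | hu
  · norm_num
  have hy : (u + 1)⁻¹ - 1 = -(u / (u + 1)) := by field_simp; ring
  have hy0 : (u + 1)⁻¹ - 1 ≠ 0 := by rw [hy, neg_ne_zero]; positivity
  have habs : |1 / ((u + 1)⁻¹ - 1)| = u⁻¹ + 1 := by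
    rw [hy, one_div, inv_neg, abs_neg, inv_div, abs_of_pos (by positivity)]
    field_simp
    ring
  have hfloor : ⌊u⁻¹ + 1 + 1 - α⌋ = ⌊u⁻¹ + 1 - α⌋ + 1 := by
    rw [← Int.floor_add_one]; ring_nf
  rw [TCF, if_neg hy0, habs, hfloor, TCF_of_pos hu]
  push_cast
  ring

lemma sub_one_le_TCF {α : ℝ} (hα : α ≤ 1) (y : ℝ) : α - 1 ≤ TCF α y := by
  unfold TCF
  split_ifs
  · linarith
  · linarith [Int.floor_le (|1 / y| + 1 - α)]

def withNegTails (S : Set ℝ) : Set ℝ := S ∪ {y | ∃ j : ℕ, ∃ g ∈ S, y = (j + g + 1)⁻¹ - 1}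

section

variable {α : ℝ} {S : Set ℝ}

lemma TCF_mem_withNegTails_of_gaussMap_mem (hα0 : 0 < α) (hα1 : α ≤ 1)
    (hS : MapsTo gaussMap S S) {t : ℝ} (ht : 0 ≤ t) (h : gaussMap t ∈ S) :
    TCF α t ∈ withNegTails S := by
  rcases ht.eq_or_lt with rfl | ht
  · exact Or.inr ⟨0, gaussMap 0, h, by simp [TCF, gaussMap]⟩
  rcases lt_or_ge (gaussMap t) α with hlt | hle
  · rw [TCF_of_gaussMap_lt hα1 ht hlt]
    exact Or.inl h
  set g := gaussMap t
  have hg : 0 < g := hα0.trans_le hle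
  have hj : 1 ≤ ⌊g⁻¹⌋₊ := Nat.le_floor <| by
    rw [Nat.cast_one]; exact (one_le_inv₀ hg).2 (gaussMap_lt_one t).le
  have hdecomp : (↑(⌊g⁻¹⌋₊ - 1) : ℝ) + gaussMap g + 1 = g⁻¹ := by
    rw [Nat.cast_sub hj, Nat.cast_one]
    linarith [natFloor_inv_add_gaussMap hg]
  refine Or.inr ⟨⌊g⁻¹⌋₊ - 1, gaussMap g, hS h, ?_⟩
  rw [TCF_of_le_gaussMap hα0.le ht hle, hdecomp, inv_inv]

lemma TCF_mem_withNegTails (hα0 : 0 < α) (hα1 : α ≤ 1) (hS : MapsTo gaussMap S S)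
    (hS0 : S ⊆ Ici 0) {y : ℝ} (hy : y ∈ withNegTails S) (hαy : α - 1 ≤ y) :
    TCF α y ∈ withNegTails S := by
  rcases hy with hy | ⟨j, g, hg, rfl⟩
  · exact TCF_mem_withNegTails_of_gaussMap_mem hα0 hα1 hS (hS0 hy) (hS hy)
  have hg0 : 0 ≤ g := hS0 hg
  rw [TCF_inv_add_one_sub_one α (by positivity)]
  cases j with
  | zero => simpa using TCF_mem_withNegTails_of_gaussMap_mem hα0 hα1 hS hg0 (hS hg)
  | succ i =>
    have hu : 1 ≤ ((i + 1 : ℕ) : ℝ) + g := by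
      push_cast; linarith [i.cast_nonneg (α := ℝ)]
    have hαu : α ≤ (((i + 1 : ℕ) : ℝ) + g)⁻¹ :=
      calc α ≤ (((i + 1 : ℕ) : ℝ) + g + 1)⁻¹ := by linarith
        _ ≤ (((i + 1 : ℕ) : ℝ) + g)⁻¹ := inv_anti₀ (by linarith) (by linarith)
    rw [TCF_of_one_le hα0 hu hαu]
    exact Or.inr ⟨i, g, hg, by push_cast; ring⟩

lemma iterate_TCF_mem_withNegTails (hα0 : 0 < α) (hα1 : α ≤ 1) (hS : MapsTo gaussMap S S)
    (hS0 : S ⊆ Ici 0) {t : ℝ} (ht : 0 ≤ t) (h : gaussMap t ∈ S) {k : ℕ} (hk : 1 ≤ k) :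
    (TCF α)^[k] t ∈ withNegTails S := by
  induction k, hk using Nat.le_induction with
  | base => exact TCF_mem_withNegTails_of_gaussMap_mem hα0 hα1 hS ht h
  | succ k hk ih =>
    obtain ⟨k, rfl⟩ : ∃ i, k = i + 1 := ⟨k - 1, by omega⟩
    rw [Function.iterate_succ_apply']
    refine TCF_mem_withNegTails hα0 hα1 hS hS0 ih ?_
    rw [Function.iterate_succ_apply']
    exact sub_one_le_TCF hα1 _

lemma mem_of_mem_withNegTails_of_pos (hS0 : S ⊆ Ici 0) {y : ℝ} (hy : y ∈ withNegTails S)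
    (hpos : 0 < y) : y ∈ S := by
  rcases hy with hy | ⟨j, g, hg, rfl⟩
  · exact hy
  have hg0 : 0 ≤ g := hS0 hg
  have := inv_le_one_of_one_le₀ (le_add_of_nonneg_left (by positivity) : (1 : ℝ) ≤ j + g + 1)
  linarith

end

/-- If α ∈ (0,1), x ∈ (0,α] and T_α^m(x) > 0 for some m ≥ 1, then there is n ≥ 1
with T_α^m(x) = T₁ⁿ(x): every positive point of the T_α-orbit of x lies in the
Gauss-map orbit of x. -/
theorem positive_orbit_point_in_gauss_orbit (α x : ℝ) (hα : α ∈ Set.Ioo (0:ℝ) 1)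
    (hx : x ∈ Set.Ioc (0:ℝ) α) (m : ℕ) (hm : 1 ≤ m) (hpos : 0 < (TCF α)^[m] x) :
    ∃ n : ℕ, 1 ≤ n ∧ (TCF α)^[m] x = gaussMap^[n] x := by
  set S := range fun n : ℕ ↦ gaussMap^[n + 1] x
  have hS : MapsTo gaussMap S S := by
    rintro _ ⟨n, rfl⟩
    exact ⟨n + 1, Function.iterate_succ_apply' _ _ _⟩
  have hS0 : S ⊆ Ici 0 := by
    rintro _ ⟨n, rfl⟩
    simpa only [mem_Ici, Function.iterate_succ_apply'] using gaussMap_nonneg _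
  have horbit := iterate_TCF_mem_withNegTails hα.1 hα.2.le hS hS0 hx.1.le ⟨0, rfl⟩ hm
  obtain ⟨n, hn⟩ := mem_of_mem_withNegTails_of_pos hS0 horbit hpos
  exact ⟨n + 1, by omega, hn.symm⟩
end

section
/- Let v ∈ A₋* be a finite word over the alphabet {(−1:d) : d ≥ 2} with characteristic sequence a₁⋯a_{2ℓ+1}, and define v̂ as the word with 'transposed' characteristic sequence, i.e., v̂ = (−1:2+a₁)(−1:2)^{a₂−1}(−1:2+a₃)⋯(−1:2)^{a_{2ℓ}−1}(−1:2+a_{2ℓ+1}). Then the matrix identity M_{v̂} = E · W · M_v · E · W holds, where M_w denotes the reversed product M_{w_n}⋯M_{w_1} for w = w₁⋯w_n, M_{(−1:d)} = [[d,1],[−1,0]], E = [[1,−1],[0,1]], W = [[1,0],[−1,−1]]. -/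
/-- M_{(−1:d)} = [[d,1],[−1,0]]. -/
def Mneg (d : ℤ) : Matrix (Fin 2) (Fin 2) ℤ := !![d, 1; -1, 0]

def Emat : Matrix (Fin 2) (Fin 2) ℤ := !![1, -1; 0, 1]

def Wmat : Matrix (Fin 2) (Fin 2) ℤ := !![1, 0; -1, -1]

/-- `prodRec f k = f (k−1) * ⋯ * f 1 * f 0`: the reversed product used for words,
since M_{uw} = M_w · M_u. -/
def prodRec (f : ℕ → Matrix (Fin 2) (Fin 2) ℤ) : ℕ → Matrix (Fin 2) (Fin 2) ℤ
  | 0 => 1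
  | k + 1 => f k * prodRec f k

/-- M_v for the word v = (−1:2)^{a₁−1}(−1:2+a₂)(−1:2)^{a₃−1}⋯(−1:2+a_{2ℓ})(−1:2)^{a_{2ℓ+1}−1}
with characteristic sequence a₁⋯a_{2ℓ+1} (here 0-indexed: a i = a_{i+1}),
as the reversed product M_{v_n}⋯M_{v_1}. -/
def Mword (a : ℕ → ℕ) (ℓ : ℕ) : Matrix (Fin 2) (Fin 2) ℤ :=
  Mneg 2 ^ (a (2 * ℓ) - 1) *
    prodRec (fun k => Mneg (2 + (a (2 * k + 1) : ℤ)) * Mneg 2 ^ (a (2 * k) - 1)) ℓ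

/-- M_{v̂} for the word v̂ = (−1:2+a₁)(−1:2)^{a₂−1}(−1:2+a₃)⋯(−1:2)^{a_{2ℓ}−1}(−1:2+a_{2ℓ+1}),
as the reversed product. -/
def Mhat (a : ℕ → ℕ) (ℓ : ℕ) : Matrix (Fin 2) (Fin 2) ℤ :=
  Mneg (2 + (a (2 * ℓ) : ℤ)) *
    prodRec (fun k => Mneg 2 ^ (a (2 * k + 1) - 1) * Mneg (2 + (a (2 * k) : ℤ))) ℓ

/-!
With `Mpos n = M_{(+1:n)}` and `Einv = E⁻¹`, a letter `(−1:2+n)` has matrix `E (Mpos n) W` and a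
block `(−1:2)^{n−1}` has matrix `W (Mpos n) E⁻¹`. Both `v` and `v̂` alternate the two kinds of
factors, so `W² = 1` and `E⁻¹E = 1` cancel all inner factors: `M_v = W Q E⁻¹` and
`M_{v̂} = E Q W` with the same `Q = M_{(+1:a_{2ℓ+1})} ⋯ M_{(+1:a_1)}`.
Hence `E W M_v E W = E W² Q E⁻¹E W = E Q W = M_{v̂}`.
-/

def Mpos (n : ℤ) : Matrix (Fin 2) (Fin 2) ℤ := !![n, -1; -1, 0]

def Einv : Matrix (Fin 2) (Fin 2) ℤ := !![1, 1; 0, 1]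

def Qmat (a : ℕ → ℕ) (n : ℕ) : Matrix (Fin 2) (Fin 2) ℤ :=
  prodRec (fun k => Mpos (a k)) n

section prodRec

variable (f g : ℕ → Matrix (Fin 2) (Fin 2) ℤ)

lemma prodRec_congr {n : ℕ} (h : ∀ k < n, f k = g k) : prodRec f n = prodRec g n := by
  induction n with
  | zero => rfl
  | succ n ih =>
    rw [prodRec, prodRec, h n n.lt_succ_self, ih fun k hk => h k (by omega)]

lemma prodRec_conj {X Y : Matrix (Fin 2) (Fin 2) ℤ} (hYX : Y * X = 1) (n : ℕ) :
    prodRec (fun k => X * f k * Y) n = X * prodRec f n * Y := by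
  induction n with
  | zero => simpa [prodRec] using (mul_eq_one_comm.mp hYX).symm
  | succ n ih =>
    rw [prodRec, prodRec, ih]
    calc X * f n * Y * (X * prodRec f n * Y)
        = X * f n * (Y * X) * prodRec f n * Y := by simp only [mul_assoc]
      _ = X * (f n * prodRec f n) * Y := by rw [hYX, mul_one]; simp only [mul_assoc]

lemma prodRec_two_mul (n : ℕ) :
    prodRec f (2 * n) = prodRec (fun k => f (2 * k + 1) * f (2 * k)) n := by
  induction n with
  | zero => rfl
  | succ n ih => rw [show 2 * (n + 1) = 2 * n + 1 + 1 by ring, prodRec, prodRec, ih,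
      prodRec, mul_assoc]

end prodRec

lemma Wmat_mul_Wmat : Wmat * Wmat = 1 := by
  simp [Wmat, Matrix.one_fin_two]

lemma Einv_mul_Emat : Einv * Emat = 1 := by
  simp [Einv, Emat, Matrix.one_fin_two]

lemma Mneg_two_add (n : ℤ) : Mneg (2 + n) = Emat * Mpos n * Wmat := by
  simp only [Mneg, Mpos, Emat, Wmat, Matrix.mul_fin_two]
  ring_nf

lemma Mpos_mul_Einv_mul_Mneg_two (x : ℤ) : Mpos x * Einv * Mneg 2 = Mpos (x + 1) * Einv := by
  simp only [Mpos, Einv, Mneg, Matrix.mul_fin_two]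
  ring_nf

lemma Mneg_two_pow (n : ℕ) : Mneg 2 ^ n = Wmat * Mpos (n + 1) * Einv := by
  induction n with
  | zero =>
    simp [Mpos, Wmat, Einv, Matrix.one_fin_two]
  | succ n ih =>
    calc Mneg 2 ^ (n + 1) = Wmat * (Mpos (n + 1) * Einv * Mneg 2) := by
          rw [pow_succ, ih]; simp only [mul_assoc]
      _ = Wmat * Mpos ((n + 1 : ℕ) + 1) * Einv := by
          rw [Mpos_mul_Einv_mul_Mneg_two]; push_cast; simp only [mul_assoc]

lemma Mneg_two_pow_sub_one {n : ℕ} (hn : 1 ≤ n) :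
    Mneg 2 ^ (n - 1) = Wmat * Mpos n * Einv := by
  rw [Mneg_two_pow, Nat.cast_sub hn, Nat.cast_one, sub_add_cancel]

lemma Qmat_two_mul_add_one (a : ℕ → ℕ) (ℓ : ℕ) :
    Qmat a (2 * ℓ + 1) =
      Mpos (a (2 * ℓ)) * prodRec (fun k => Mpos (a (2 * k + 1)) * Mpos (a (2 * k))) ℓ := by
  rw [Qmat, prodRec, prodRec_two_mul]

lemma Mword_eq_Wmat_mul_Qmat_mul_Einv (a : ℕ → ℕ) (ℓ : ℕ) (ha : ∀ i ≤ 2 * ℓ, 1 ≤ a i) :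
    Mword a ℓ = Wmat * Qmat a (2 * ℓ + 1) * Einv := by
  have hpair : ∀ k < ℓ, Mneg (2 + (a (2 * k + 1) : ℤ)) * Mneg 2 ^ (a (2 * k) - 1) =
      Emat * (Mpos (a (2 * k + 1)) * Mpos (a (2 * k))) * Einv := by
    intro k hk
    rw [Mneg_two_add, Mneg_two_pow_sub_one (ha _ (by omega))]
    calc Emat * Mpos (a (2 * k + 1)) * Wmat * (Wmat * Mpos (a (2 * k)) * Einv)
        = Emat * Mpos (a (2 * k + 1)) * (Wmat * Wmat) * Mpos (a (2 * k)) * Einv := by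
          simp only [mul_assoc]
      _ = _ := by rw [Wmat_mul_Wmat, mul_one]; simp only [mul_assoc]
  rw [Mword, prodRec_congr _ _ hpair, prodRec_conj _ Einv_mul_Emat,
    Mneg_two_pow_sub_one (ha _ le_rfl), Qmat_two_mul_add_one]
  simp only [← mul_assoc]
  rw [mul_assoc _ Einv Emat, Einv_mul_Emat, mul_one]

lemma Mhat_eq_Emat_mul_Qmat_mul_Wmat (a : ℕ → ℕ) (ℓ : ℕ) (ha : ∀ i ≤ 2 * ℓ, 1 ≤ a i) :
    Mhat a ℓ = Emat * Qmat a (2 * ℓ + 1) * Wmat := by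
  have hpair : ∀ k < ℓ, Mneg 2 ^ (a (2 * k + 1) - 1) * Mneg (2 + (a (2 * k) : ℤ)) =
      Wmat * (Mpos (a (2 * k + 1)) * Mpos (a (2 * k))) * Wmat := by
    intro k hk
    rw [Mneg_two_add, Mneg_two_pow_sub_one (ha _ (by omega))]
    calc Wmat * Mpos (a (2 * k + 1)) * Einv * (Emat * Mpos (a (2 * k)) * Wmat)
        = Wmat * Mpos (a (2 * k + 1)) * (Einv * Emat) * Mpos (a (2 * k)) * Wmat := by
          simp only [mul_assoc]
      _ = _ := by rw [Einv_mul_Emat, mul_one]; simp only [mul_assoc]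
  rw [Mhat, prodRec_congr _ _ hpair, prodRec_conj _ Wmat_mul_Wmat, Mneg_two_add,
    Qmat_two_mul_add_one]
  simp only [← mul_assoc]
  rw [mul_assoc _ Wmat Wmat, Wmat_mul_Wmat, mul_one]

/-- For any word v over A₋ with characteristic sequence a₁⋯a_{2ℓ+1},
M_{v̂} = E · W · M_v · E · W. -/
theorem Mhat_eq (a : ℕ → ℕ) (ℓ : ℕ) (ha : ∀ i ≤ 2 * ℓ, 1 ≤ a i) :
    Mhat a ℓ = Emat * Wmat * Mword a ℓ * Emat * Wmat := by
  rw [Mhat_eq_Emat_mul_Qmat_mul_Wmat a ℓ ha, Mword_eq_Wmat_mul_Qmat_mul_Einv a ℓ ha]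
  calc Emat * Qmat a (2 * ℓ + 1) * Wmat
      = Emat * (Wmat * Wmat) * Qmat a (2 * ℓ + 1) * (Einv * Emat) * Wmat := by
        rw [Wmat_mul_Wmat, Einv_mul_Emat, mul_one, mul_one]
    _ = Emat * Wmat * (Wmat * Qmat a (2 * ℓ + 1) * Einv) * Emat * Wmat := by
        simp only [mul_assoc]
end
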